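/- arXiv:0805.2729 — 3 statements merged into one kernel-verified Lean document; each statement's English description precedes it below -/
import Mathlib

section
/- Let n ≥ 3, 2 ≤ i_1 ≤ n−2, i_1 + 1 ≤ t_2 ≤ n−1, and i_2 with i_2 + t_2 > n and i_2 ≥ n − t_2 + i_1 (so i_2 − i_1 ≥ n − t_2 ≥ 1). Define C_1 = ... = C_{i_1} = C_n = [n], C_{i_1+1} = ... = C_{i_1+n−i_2−1} = [n] \ ({t_2+1,...,n} ∪ {1,...,i_2+t_2−n}), C_{i_1+n−i_2} = ... = C_{n−1} = [n] \ [i_1]. Then {Σ_{k=1}^n e_{j_k} : j_k ∈ C_k} = {α ∈ ℕ^n : |α| = n, α_1 + ... + α_{i_1} ≤ i_1 + 1, Σ_{k=1}^{i_2+t_2−n} α_k + Σ_{k=t_2+1}^{n} α_k ≤ i_2 + 1}. -/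
/-!
The slot sets form a chain `[n] ⊇ [n] \ [i₁] ⊇ [n] \ B`, with `B` the index set of the last
inequality (it contains `[i₁]` because `i₂ ≥ n - t₂ + i₁`). By Hall's theorem, matching slots with
tokens (`α m` copies of each `m`), `α` is a sum of representatives iff every union of slot sets
carries at least as much mass as there are slots involved. For a chain such a union is its largest
member, so one inequality per level remains: the mass outside the level-`i` set is at most the
number of slots below level `i`. For the three levels here these counts are `min n (i₁ + 1)` and
`min n (i₂ + 1)`.
-/

open Finset

section Transversal

variable {ι U : Type*} [Fintype ι] [DecidableEq U]

theorem sum_pi_single_one_apply (j : ι → U) (m : U) :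
    (∑ k, Pi.single (j k) 1 : U → ℕ) m = #{k | j k = m} := by
  simp [Finset.sum_apply, Pi.single_apply, eq_comm]

theorem sum_sum_pi_single_one (j : ι → U) (s : Finset U) :
    ∑ m ∈ s, (∑ k, Pi.single (j k) 1 : U → ℕ) m = #{k | j k ∈ s} := by
  simp only [sum_pi_single_one_apply, sum_card_fiberwise_eq_card_filter]

variable [Fintype U]

theorem card_filter_sigma_fst_mem (α : U → ℕ) (s : Finset U) :
    #{τ : Σ m, Fin (α m) | τ.1 ∈ s} = ∑ m ∈ s, α m := by
  rw [show ({τ : Σ m, Fin (α m) | τ.1 ∈ s} : Finset _) = s.sigma fun _ => univ by ext; simp,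
    card_sigma]
  simp

theorem exists_transversal_of_forall_card_le (C : ι → Finset U) (α : U → ℕ)
    (hsum : ∑ m, α m = Fintype.card ι) (hall : ∀ S : Finset ι, #S ≤ ∑ m ∈ S.biUnion C, α m) :
    ∃ j : ι → U, (∀ k, j k ∈ C k) ∧ α = ∑ k, Pi.single (j k) 1 := by
  -- A matching of slots into tokens is a bijection: both sides have `∑ m, α m` elements.
  obtain ⟨f, hf_inj, hf_mem⟩ := (all_card_le_biUnion_card_iff_exists_injective
      fun k => ({τ : Σ m, Fin (α m) | τ.1 ∈ C k} : Finset _)).1 fun S => by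
    rw [show S.biUnion (fun k => ({τ : Σ m, Fin (α m) | τ.1 ∈ C k} : Finset _))
        = ({τ : Σ m, Fin (α m) | τ.1 ∈ S.biUnion C} : Finset _) by ext; simp,
      card_filter_sigma_fst_mem]
    exact hall S
  have hf_bij : Function.Bijective f :=
    (Fintype.bijective_iff_injective_and_card f).2 ⟨hf_inj, by simp [hsum]⟩
  refine ⟨fun k => (f k).1, fun k => by simpa using hf_mem k, funext fun m => ?_⟩
  have hcard : #{k | (f k).1 = m} = #{τ : Σ m, Fin (α m) | τ.1 = m} := by
    simp only [card_filter]
    exact (Equiv.ofBijective f hf_bij).sum_comp fun τ => if τ.1 = m then 1 else 0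
  rw [sum_pi_single_one_apply, hcard]
  simpa using (card_filter_sigma_fst_mem α {m}).symm

theorem exists_transversal_iff_of_antitone {β : Type*} [LinearOrder β] {D : β → Finset U}
    (hD : Antitone D) (lev : ι → β) (α : U → ℕ) :
    (∃ j : ι → U, (∀ k, j k ∈ D (lev k)) ∧ α = ∑ k, Pi.single (j k) 1) ↔
      ∑ m, α m = Fintype.card ι ∧ ∀ i, ∑ m ∈ (D i)ᶜ, α m ≤ #{k | lev k < i} := by
  constructor
  · rintro ⟨j, hj, rfl⟩
    refine ⟨by simpa using sum_sum_pi_single_one j univ, fun i => ?_⟩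
    rw [sum_sum_pi_single_one]
    refine card_le_card (monotone_filter_right _ fun k _ hk => ?_)
    by_contra! hi
    exact (mem_compl.1 hk) (hD hi (hj k))
  · rintro ⟨hsum, hlev⟩
    refine exists_transversal_of_forall_card_le _ α hsum fun S => ?_
    rcases S.eq_empty_or_nonempty with rfl | hS
    · simp
    obtain ⟨k, hkS, hk_min⟩ := S.exists_min_image lev hS
    have hS_sub : S ⊆ ({l | lev k ≤ lev l} : Finset ι) := fun l hl => by simpa using hk_min l hl
    have hcount := card_filter_add_card_filter_not (s := univ) fun l => lev l < lev k
    have hsplit := sum_add_sum_compl (D (lev k)) α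
    simp only [not_lt, card_univ] at hcount
    calc #S ≤ #{l | lev k ≤ lev l} := card_le_card hS_sub
      _ ≤ ∑ m ∈ D (lev k), α m := by have := hlev (lev k); omega
      _ ≤ ∑ m ∈ S.biUnion (D ∘ lev), α m :=
        sum_le_sum_of_subset (subset_biUnion_of_mem (D ∘ lev) hkS)

end Transversal

def complChain {U : Type*} [Fintype U] [DecidableEq U] (L B : Finset U) : ℕ → Finset U
  | 0 => univ
  | 1 => Lᶜ
  | _ + 2 => Bᶜ

section ComplChain

variable {ι U : Type*} [Fintype ι] [Fintype U] [DecidableEq U] {L B : Finset U}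

theorem antitone_complChain (h : L ⊆ B) : Antitone (complChain L B) :=
  antitone_nat_of_succ_le fun
    | 0 => subset_univ _
    | 1 => compl_subset_compl.2 h
    | _ + 2 => subset_rfl

theorem forall_sum_compl_complChain_le_iff (lev : ι → ℕ) (α : U → ℕ) :
    (∀ i, ∑ m ∈ (complChain L B i)ᶜ, α m ≤ #{k | lev k < i}) ↔
      ∑ m ∈ L, α m ≤ #{k | lev k < 1} ∧ ∑ m ∈ B, α m ≤ #{k | lev k < 2} := by
  refine ⟨fun h => by simpa [complChain] using And.intro (h 1) (h 2), fun ⟨hL, hB⟩ i => ?_⟩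
  match i with
  | 0 => simp [complChain]
  | 1 => simpa [complChain] using hL
  | i + 2 =>
    simp only [complChain, compl_compl]
    exact hB.trans (card_le_card (monotone_filter_right _ fun k _ hk => by omega))

end ComplChain

theorem Fin.card_filter_le_and_lt (n a b : ℕ) :
    #{k : Fin n | a ≤ k.val ∧ k.val < b} = min n b - a := by
  rw [← card_map Fin.valEmbedding, ← Nat.card_Ico]
  congr 1
  ext x
  simp only [mem_map, mem_filter, mem_univ, true_and, Fin.valEmbedding_apply, mem_Ico]
  constructor
  · rintro ⟨k, hk, rfl⟩; omega
  · intro h; exact ⟨⟨x, by omega⟩, by simp only; omega, rfl⟩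

/-- Slots of level `0`, `1`, `2` are those with `C k = [n]`, `[n] \ [i₁]`, `[n] \ B`. -/
def slotLevel (n i1 i2 : ℕ) (k : Fin n) : ℕ :=
  if k.val < i1 ∨ k.val = n - 1 then 0 else if k.val < i1 + n - i2 - 1 then 2 else 1

section SlotLevel

variable {n i1 i2 : ℕ}

theorem card_slotLevel_lt_one : #{k | slotLevel n i1 i2 k < 1} = min n (i1 + 1) := by
  have hupper : #{k | ¬ slotLevel n i1 i2 k < 1} = n - 1 - i1 := by
    rw [filter_congr (q := fun k : Fin n => i1 ≤ k.val ∧ k.val < n - 1) fun k _ => by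
      have := k.isLt; unfold slotLevel; split_ifs <;> omega, Fin.card_filter_le_and_lt]
    omega
  have hcount := card_filter_add_card_filter_not (s := univ) fun k => slotLevel n i1 i2 k < 1
  rw [hupper, card_univ, Fintype.card_fin] at hcount
  omega

theorem card_slotLevel_lt_two (h : i1 ≤ i2) :
    #{k | slotLevel n i1 i2 k < 2} = min n (i2 + 1) := by
  have hupper : #{k | ¬ slotLevel n i1 i2 k < 2} = n - i2 - 1 := by
    rw [filter_congr (q := fun k : Fin n => i1 ≤ k.val ∧ k.val < i1 + n - i2 - 1) fun k _ => by
      have := k.isLt; unfold slotLevel; split_ifs <;> omega, Fin.card_filter_le_and_lt]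
    omega
  have hcount := card_filter_add_card_filter_not (s := univ) fun k => slotLevel n i1 i2 k < 2
  rw [hupper, card_univ, Fintype.card_fin] at hcount
  omega

end SlotLevel

theorem stmt10_general (n i1 i2 t2 : ℕ) (hi2a : n - t2 + i1 ≤ i2)
    (C : Fin n → Set (Fin n))
    (hC : ∀ k : Fin n,
      C k = if k.val < i1 ∨ k.val = n - 1 then (Set.univ : Set (Fin n))
            else if k.val < i1 + n - i2 - 1 then
              {m : Fin n | ¬ (t2 ≤ m.val ∨ m.val < i2 + t2 - n)}
            else {m : Fin n | i1 ≤ m.val}) :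
    {α : Fin n → ℕ | ∃ j : Fin n → Fin n, (∀ k, j k ∈ C k) ∧ α = ∑ k, Pi.single (j k) 1} =
    {α : Fin n → ℕ | ∑ k, α k = n ∧
      ∑ k ∈ Finset.univ.filter (fun m : Fin n => m.val < i1), α k ≤ i1 + 1 ∧
      ∑ k ∈ Finset.univ.filter (fun m : Fin n => m.val < i2 + t2 - n ∨ t2 ≤ m.val), α k ≤ i2 + 1} := by
  set L : Finset (Fin n) := {m | m.val < i1}
  set B : Finset (Fin n) := {m | m.val < i2 + t2 - n ∨ t2 ≤ m.val}
  have hLB : L ⊆ B := fun m hm => by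
    simp only [L, B, mem_filter, mem_univ, true_and] at hm ⊢
    omega
  have hCD : ∀ k, C k = complChain L B (slotLevel n i1 i2 k) := fun k => by
    rw [hC k]; unfold slotLevel
    split_ifs <;> ext m <;> simp [complChain, L, B, or_comm]
  ext α
  simp only [Set.mem_ofPred_eq, hCD, mem_coe]
  rw [exists_transversal_iff_of_antitone (antitone_complChain hLB),
    forall_sum_compl_complChain_le_iff, card_slotLevel_lt_one, card_slotLevel_lt_two (by omega),
    Fintype.card_fin]
  have hL : ∑ m ∈ L, α m ≤ ∑ m, α m := sum_le_sum_of_subset (subset_univ L)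
  have hB : ∑ m ∈ B, α m ≤ ∑ m, α m := sum_le_sum_of_subset (subset_univ B)
  constructor <;> rintro ⟨hs, h1, h2⟩ <;> exact ⟨hs, by omega, by omega⟩

theorem stmt10 (n i1 i2 t2 : ℕ) (hn : 3 ≤ n) (hi1a : 2 ≤ i1) (hi1b : i1 ≤ n - 2)
    (ht2a : i1 + 1 ≤ t2) (ht2b : t2 ≤ n - 1)
    (hcyc : n < i2 + t2) (hi2a : n - t2 + i1 ≤ i2)
    (C : Fin n → Set (Fin n))
    (hC : ∀ k : Fin n,
      C k = if k.val < i1 ∨ k.val = n - 1 then (Set.univ : Set (Fin n))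
            else if k.val < i1 + n - i2 - 1 then
              {m : Fin n | ¬ (t2 ≤ m.val ∨ m.val < i2 + t2 - n)}
            else {m : Fin n | i1 ≤ m.val}) :
    {α : Fin n → ℕ | ∃ j : Fin n → Fin n, (∀ k, j k ∈ C k) ∧ α = ∑ k, Pi.single (j k) 1} =
    {α : Fin n → ℕ | ∑ k, α k = n ∧
      ∑ k ∈ Finset.univ.filter (fun m : Fin n => m.val < i1), α k ≤ i1 + 1 ∧
      ∑ k ∈ Finset.univ.filter (fun m : Fin n => m.val < i2 + t2 - n ∨ t2 ≤ m.val), α k ≤ i2 + 1} :=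
  stmt10_general n i1 i2 t2 hi2a C hC
end

section
/- Let n ≥ 3, 0 ≤ t_2 ≤ n−1, and 1 ≤ i_1, i_2 ≤ n−2 with i_1 = 1. Let P = {α ∈ ℕ^n : |α| = n, α_1 ≤ 2, (cyclic window sum of length i_2 starting at t_2+1 of α) ≤ i_2 + 1}. Then there exist subsets C_1,...,C_n ⊆ [n] with P = {Σ_{k=1}^n e_{j_k} : j_k ∈ C_k}. -/
/-!
By Rado's theorem (Hall's theorem applied to `α v` copies of each point `v`), `α` lies in the
transversal polymatroid presented by `C₁, …, Cₙ` iff `|α| = n` and `α(J) ≤ #{k | J meets C_k}`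
for every `J`. For `P = {|α| = n, α_z ≤ a, α(W) ≤ b}` it therefore suffices to find `C` whose rank
is `a` on `{z}`, at most `b` on `W`, at least `b` on each other point of `W`, maximal off
`W ∪ {z}`, and at least `min n (a + b)` on `{z, v}` when `z ∉ W`. Taking `C_k` to be the
complement of `{z}`, `∅`, `W`, `W ∪ {z}` on consecutive blocks of positions does this. The theorem
is the case `z = 1`, `a = 2`, `W` the cyclic window and `b = i₂ + 1`.
-/

open Finset

section Transversal

variable {ι V : Type*} [Fintype ι] [DecidableEq V]

def transversalSet (C : ι → Finset V) : Set (V → ℕ) :=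
  {α | ∃ j : ι → V, (∀ k, j k ∈ C k) ∧ α = ∑ k, Pi.single (j k) 1}

def transversalRank (C : ι → Finset V) (J : Finset V) : ℕ :=
  #{k | ∃ v ∈ J, v ∈ C k}

variable (C : ι → Finset V)

lemma transversalRank_mono {J J' : Finset V} (h : J ⊆ J') :
    transversalRank C J ≤ transversalRank C J' :=
  card_le_card <| monotone_filter_right _ fun _ _ ⟨v, hv, hvC⟩ => ⟨v, h hv, hvC⟩

lemma transversalRank_singleton (v : V) : transversalRank C {v} = #{k | v ∈ C k} := by
  simp [transversalRank]

lemma sum_sum_single_apply (j : ι → V) (J : Finset V) :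
    ∑ v ∈ J, (∑ k, Pi.single (j k) 1 : V → ℕ) v = #{k | j k ∈ J} := by
  simp only [Finset.sum_apply, Pi.single_apply, card_filter]
  rw [Finset.sum_comm]
  simp

lemma sum_le_transversalRank {j : ι → V} (hj : ∀ k, j k ∈ C k) (J : Finset V) :
    ∑ v ∈ J, (∑ k, Pi.single (j k) 1 : V → ℕ) v ≤ transversalRank C J := by
  rw [sum_sum_single_apply]
  exact card_le_card <| monotone_filter_right _ fun k _ hk => ⟨j k, hk, hj k⟩

lemma exists_transversal_of_sum_le_transversalRank [Fintype V] {α : V → ℕ}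
    (hsum : ∑ v, α v = Fintype.card ι) (hα : ∀ J, ∑ v ∈ J, α v ≤ transversalRank C J) :
    α ∈ transversalSet C := by
  classical
  obtain ⟨f, hf_inj, hf⟩ := (Fintype.all_card_le_filter_rel_iff_exists_injective
    (fun (p : Σ v, Fin (α v)) k => p.1 ∈ C k)).mp fun A => by
      calc #A ≤ #((A.image Sigma.fst).sigma fun _ => univ) :=
            card_le_card fun p hp => mem_sigma.mpr ⟨mem_image_of_mem _ hp, mem_univ _⟩
        _ = ∑ v ∈ A.image Sigma.fst, α v := by simp
        _ ≤ _ := (hα _).trans_eq (by simp [transversalRank])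
  have hf_bij : Function.Bijective f :=
    (Fintype.bijective_iff_injective_and_card f).mpr ⟨hf_inj, by simp [hsum]⟩
  set e := Equiv.ofBijective f hf_bij
  refine ⟨fun k => (e.symm k).1, fun k => by
    simpa only [e, Equiv.ofBijective_apply_symm_apply] using hf (e.symm k), funext fun v => ?_⟩
  have hfiber : #{p : Σ v, Fin (α v) | p.1 = v} = α v := by
    rw [show ({p | p.1 = v} : Finset (Σ v, Fin (α v))) = ({v} : Finset V).sigma fun _ => univ by
      ext ⟨u, i⟩; simp]
    simp
  have := sum_sum_single_apply (fun k => (e.symm k).1) {v}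
  simp only [sum_singleton, mem_singleton] at this
  rw [this, ← hfiber]
  exact card_bijective f hf_bij fun p => by simp [e]

theorem mem_transversalSet_iff [Fintype V] {α : V → ℕ} :
    α ∈ transversalSet C ↔
      ∑ v, α v = Fintype.card ι ∧ ∀ J, ∑ v ∈ J, α v ≤ transversalRank C J := by
  constructor
  · rintro ⟨j, hj, rfl⟩
    exact ⟨by simpa using sum_sum_single_apply j univ, sum_le_transversalRank C hj⟩
  · exact fun ⟨hsum, hα⟩ => exists_transversal_of_sum_le_transversalRank C hsum hα

theorem transversalSet_eq_of_transversalRank [Fintype V] {z : V} {W : Finset V} {a b : ℕ}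
    (hz : transversalRank C {z} = a) (hW : transversalRank C W ≤ b)
    (hWv : ∀ v ∈ W, v ≠ z → b ≤ transversalRank C {v})
    (hout : ∀ v ∉ W, v ≠ z → Fintype.card ι ≤ transversalRank C {v})
    (hzv : z ∉ W → ∀ v ∈ W, min (Fintype.card ι) (a + b) ≤ transversalRank C {z, v}) :
    transversalSet C = {α | ∑ v, α v = Fintype.card ι ∧ α z ≤ a ∧ ∑ v ∈ W, α v ≤ b} := by
  ext α
  rw [mem_transversalSet_iff]
  refine ⟨fun ⟨hsum, hα⟩ => ⟨hsum, by simpa [hz] using hα {z}, (hα W).trans hW⟩, ?_⟩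
  rintro ⟨hsum, hαz, hαW⟩
  refine ⟨hsum, fun J => ?_⟩
  have hN : ∑ v ∈ J, α v ≤ Fintype.card ι := hsum ▸ sum_le_sum_of_subset (subset_univ J)
  by_cases hJ : J ⊆ insert z W
  swap
  · obtain ⟨v, hvJ, hv⟩ := not_subset.mp hJ
    rw [mem_insert, not_or] at hv
    exact hN.trans <| (hout v hv.2 hv.1).trans <|
      transversalRank_mono C (singleton_subset_iff.mpr hvJ)
  by_cases hJz : J ⊆ {z}
  · rcases subset_singleton_iff.mp hJz with rfl | rfl
    · simp
    · simpa [hz] using hαz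
  obtain ⟨v, hvJ, hvz⟩ := not_subset.mp hJz
  rw [mem_singleton] at hvz
  have hvW : v ∈ W := (mem_insert.mp (hJ hvJ)).resolve_left hvz
  by_cases hzJ : z ∈ J ∧ z ∉ W
  · calc ∑ v ∈ J, α v ≤ min (Fintype.card ι) (a + b) := le_min hN <| calc
          ∑ v ∈ J, α v ≤ ∑ v ∈ insert z W, α v := sum_le_sum_of_subset hJ
          _ = α z + ∑ v ∈ W, α v := sum_insert hzJ.2
          _ ≤ a + b := add_le_add hαz hαW
      _ ≤ transversalRank C {z, v} := hzv hzJ.2 v hvW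
      _ ≤ transversalRank C J :=
        transversalRank_mono C (insert_subset hzJ.1 (singleton_subset_iff.mpr hvJ))
  · have hJW : J ⊆ W := fun u hu => by
      rcases mem_insert.mp (hJ hu) with rfl | hu'
      · exact not_not.mp fun hzW => hzJ ⟨hu, hzW⟩
      · exact hu'
    calc ∑ v ∈ J, α v ≤ ∑ v ∈ W, α v := sum_le_sum_of_subset hJW
      _ ≤ b := hαW
      _ ≤ transversalRank C {v} := hWv v hvW hvz
      _ ≤ transversalRank C J := transversalRank_mono C (singleton_subset_iff.mpr hvJ)

end Transversal

lemma Fin.card_filter_le_val_lt (n lo hi : ℕ) :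
    #{k : Fin n | lo ≤ (k : ℕ) ∧ (k : ℕ) < hi} = min n hi - lo := by
  rw [← card_map Fin.valEmbedding, map_filter', Fin.map_valEmbedding_univ, ← Nat.card_Ico]
  congr 1
  ext m
  simp [Fin.exists_iff]
  omega

section FinPositions

variable {V : Type*} [DecidableEq V] {n : ℕ} (C : Fin n → Finset V) {J : Finset V} {m : ℕ}

lemma le_transversalRank_of_forall_lt (h : ∀ k : Fin n, (k : ℕ) < m → ∃ v ∈ J, v ∈ C k) :
    min n m ≤ transversalRank C J :=
  Fin.card_filter_val_lt ▸ card_le_card (monotone_filter_right _ fun k _ => h k)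

lemma transversalRank_le_of_forall_lt (h : ∀ k : Fin n, (∃ v ∈ J, v ∈ C k) → (k : ℕ) < m) :
    transversalRank C J ≤ min n m :=
  Fin.card_filter_val_lt ▸ card_le_card (monotone_filter_right _ fun k _ => h k)

end FinPositions

theorem exists_transversalSet_eq {V : Type*} [DecidableEq V] [Fintype V] (z : V) (W : Finset V)
    {n a b : ℕ} (hab : a ≤ b) (hbn : b ≤ n) :
    ∃ C : Fin n → Finset V,
      transversalSet C = {α | ∑ v, α v = n ∧ α z ≤ a ∧ ∑ v ∈ W, α v ≤ b} := by
  set s := if z ∈ W then b - a else min b (n - a) with hs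
  have hsb : s ≤ b := by split_ifs at hs <;> omega
  -- `s` is chosen so that exactly `a` positions admit `z`: those in `[s, b)`, and also those
  -- in `[b, a + b)` when `z ∉ W`.
  set C : Fin n → Finset V := fun k =>
    if (k : ℕ) < s then {z}ᶜ else if (k : ℕ) < b then univ
    else if (k : ℕ) < a + b then Wᶜ else (insert z W)ᶜ with hC
  have hz : transversalRank C {z} = a := by
    have hzC : ∀ k : Fin n, z ∈ C k ↔ s ≤ (k : ℕ) ∧ (k : ℕ) < if z ∈ W then b else a + b := by
      intro k
      by_cases hzW : z ∈ W <;> simp only [hC, hzW, if_true, if_false] <;> split_ifs <;>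
        simp [hzW] <;> omega
    rw [transversalRank_singleton, filter_congr fun k _ => hzC k, Fin.card_filter_le_val_lt]
    split_ifs at hs ⊢ <;> omega
  have hW : transversalRank C W ≤ b := by
    refine (transversalRank_le_of_forall_lt C fun k ⟨v, hvW, hvC⟩ => ?_).trans (min_le_right n b)
    simp only [hC] at hvC
    split_ifs at hvC <;> first | omega | simp [hvW] at hvC
  have hWv : ∀ v ∈ W, v ≠ z → b ≤ transversalRank C {v} := by
    refine fun v hvW hvz => (le_transversalRank_of_forall_lt (m := b) C fun k hk =>
      ⟨v, mem_singleton_self v, ?_⟩).trans' (by omega)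
    simp only [hC]
    split_ifs <;> first | omega | simp [hvz]
  have hout : ∀ v ∉ W, v ≠ z → Fintype.card (Fin n) ≤ transversalRank C {v} := by
    refine fun v hvW hvz => (le_transversalRank_of_forall_lt (m := n) C fun k _ =>
      ⟨v, mem_singleton_self v, ?_⟩).trans' (by simp)
    simp only [hC]
    split_ifs <;> simp [hvW, hvz]
  have hzv : z ∉ W → ∀ v ∈ W, min (Fintype.card (Fin n)) (a + b) ≤ transversalRank C {z, v} := by
    refine fun hzW v hvW =>
      (le_transversalRank_of_forall_lt (m := a + b) C fun k hk => ?_).trans' (by simp)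
    have hvz : v ≠ z := fun h => hzW (h ▸ hvW)
    simp only [hC, mem_insert, mem_singleton, exists_eq_or_imp, exists_eq_left]
    split_ifs <;> first | omega | simp [hzW, hvz]
  refine ⟨C, ?_⟩
  simpa using transversalSet_eq_of_transversalRank C hz hW hWv hout hzv

theorem stmt14_general (n i1 i2 t2 : ℕ) (hn : 3 ≤ n)
    (hi1 : i1 = 1) (hi2a : 1 ≤ i2) (hi2b : i2 ≤ n - 2) :
    ∃ C : Fin n → Set (Fin n),
      {α : Fin n → ℕ | ∑ k, α k = n ∧
        ∑ k ∈ Finset.univ.filter (fun m : Fin n => m.val < i1), α k ≤ i1 + 1 ∧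
        ∑ k ∈ Finset.univ.filter (fun m : Fin n =>
            (t2 ≤ m.val ∧ m.val < t2 + i2) ∨ (n < t2 + i2 ∧ m.val < i2 + t2 - n)), α k
          ≤ i2 + 1} =
      {α : Fin n → ℕ | ∃ j : Fin n → Fin n, (∀ k, j k ∈ C k) ∧ α = ∑ k, Pi.single (j k) 1} := by
  subst hi1
  have hfirst : (univ.filter fun m : Fin n => m.val < 1) = {⟨0, by omega⟩} := by
    ext m
    simp [Fin.ext_iff]
  obtain ⟨C, hC⟩ := exists_transversalSet_eq (⟨0, by omega⟩ : Fin n)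
    (univ.filter fun m : Fin n =>
      (t2 ≤ m.val ∧ m.val < t2 + i2) ∨ (n < t2 + i2 ∧ m.val < i2 + t2 - n))
    (n := n) (a := 2) (b := i2 + 1) (by omega) (by omega)
  refine ⟨fun k => C k, ?_⟩
  rw [hfirst]
  simp only [sum_singleton, Nat.reduceAdd]
  rw [← hC]
  rfl

theorem stmt14 (n i1 i2 t2 : ℕ) (hn : 3 ≤ n) (ht2 : t2 ≤ n - 1)
    (hi1 : i1 = 1) (hi1b : i1 ≤ n - 2) (hi2a : 1 ≤ i2) (hi2b : i2 ≤ n - 2) :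
    ∃ C : Fin n → Set (Fin n),
      {α : Fin n → ℕ | ∑ k, α k = n ∧
        ∑ k ∈ Finset.univ.filter (fun m : Fin n => m.val < i1), α k ≤ i1 + 1 ∧
        ∑ k ∈ Finset.univ.filter (fun m : Fin n =>
            (t2 ≤ m.val ∧ m.val < t2 + i2) ∨ (n < t2 + i2 ∧ m.val < i2 + t2 - n)), α k
          ≤ i2 + 1} =
      {α : Fin n → ℕ | ∃ j : Fin n → Fin n, (∀ k, j k ∈ C k) ∧ α = ∑ k, Pi.single (j k) 1} :=
  stmt14_general n i1 i2 t2 hn hi1 hi2a hi2b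
end

section
/- Let n ≥ 3, 2 ≤ i_1 ≤ n−2, and 1 ≤ i_2 ≤ n−2, with t_2 = i_1. Let P = {α ∈ ℕ^n : |α| = n, α_1 + ... + α_{i_1} ≤ i_1 + 1, (cyclic window sum of length i_2 starting at i_1+1 of α) ≤ i_2 + 1}. Then there exist subsets C_1,...,C_n ⊆ [n] with P = {Σ_{k=1}^n e_{j_k} : j_k ∈ C_k}. -/
/-!
Write `A = [1, i₁]` and `W` for the cyclic window. Split the `n` slots into four blocks, whose
sets are `Aᶜ`, `Wᶜ`, `(A ∪ W)ᶜ` and `[n]`, of sizes `p, q, r, u`. By Hall's theorem, with each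
coordinate `b` split into `α b` tokens, `α` is a base of this transversal polymatroid iff
`|α| = p + q + r + u`, `α(A) ≤ q + u`, `α(W) ≤ p + u`, `α(A ∪ W) ≤ p + q + u` and
`α(A ∩ W) ≤ u`. Taking `u = (i₁ + i₂ + 2 - n)⁺` and `r = (n - i₁ - i₂ - 2)⁺` turns the first
two bounds into the defining inequalities of `P`, and the last two then follow since `A` and `W`
are either disjoint or cover `[n]`.
-/

open Finset

variable {ι ι' κ β : Type*} [Fintype ι] [DecidableEq β]

def transversalBases (C : ι → Set β) : Set (β → ℕ) :=
  {α | ∃ j : ι → β, (∀ k, j k ∈ C k) ∧ α = ∑ k, Pi.single (j k) 1}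

theorem transversalBases_comp_equiv [Fintype ι'] (e : ι' ≃ ι) (C : ι → Set β) :
    transversalBases (C ∘ e) = transversalBases C := by
  ext α
  constructor
  · rintro ⟨j, hj, rfl⟩
    refine ⟨j ∘ e.symm, fun k => by simpa using hj (e.symm k), ?_⟩
    exact (e.symm.sum_comp fun k => Pi.single (j k) 1).symm
  · rintro ⟨j, hj, rfl⟩
    exact ⟨j ∘ e, fun k => hj (e k), (e.sum_comp fun k => Pi.single (j k) 1).symm⟩

theorem sum_sum_single_one_apply (j : ι → β) (D : Finset β) :
    ∑ b ∈ D, (∑ k, Pi.single (j k) 1 : β → ℕ) b = #{k | j k ∈ D} := by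
  simp only [Finset.sum_apply, Pi.single_apply, card_filter]
  rw [Finset.sum_comm]
  simp [Finset.sum_ite_eq']

theorem mem_transversalBases_iff_forall_card_le [Fintype β] (C : ι → Finset β) (α : β → ℕ) :
    α ∈ transversalBases (fun k => (C k : Set β)) ↔
      ∑ b, α b = Fintype.card ι ∧ ∀ s : Finset ι, #s ≤ ∑ b ∈ s.biUnion C, α b := by
  constructor
  · rintro ⟨j, hj, rfl⟩
    refine ⟨by simpa using sum_sum_single_one_apply j univ, fun s => ?_⟩
    rw [sum_sum_single_one_apply]
    exact card_le_card fun k hk =>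
      mem_filter.2 ⟨mem_univ k, mem_biUnion.2 ⟨k, hk, hj k⟩⟩
  · rintro ⟨hsum, hall⟩
    let tokens : ι → Finset (Σ b, Fin (α b)) := fun k => (C k).sigma fun _ => univ
    obtain ⟨f, hf_inj, hf_mem⟩ :=
      (all_card_le_biUnion_card_iff_exists_injective tokens).1 fun s => by
        have : s.biUnion tokens = (s.biUnion C).sigma fun _ => univ := by
          ext ⟨b, i⟩; simp [tokens]
        simpa [this] using hall s
    have hf_bij : Function.Bijective f := by
      rw [Fintype.bijective_iff_injective_and_card]
      exact ⟨hf_inj, by simp [hsum]⟩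
    refine ⟨fun k => (f k).1, fun k => by simpa [tokens] using hf_mem k, ?_⟩
    funext b
    rw [Finset.sum_apply, hf_bij.sum_comp fun x => (Pi.single x.1 1 : β → ℕ) b, Fintype.sum_sigma]
    simp [Pi.single_apply]

theorem mem_transversalBases_sigma_iff [Fintype κ] [DecidableEq κ] [Fintype β] (m : κ → ℕ)
    (G : κ → Finset β) (α : β → ℕ) :
    α ∈ transversalBases (fun k : Σ x, Fin (m x) => (G k.1 : Set β)) ↔
      ∑ b, α b = ∑ x, m x ∧ ∀ K : Finset κ, ∑ x ∈ K, m x ≤ ∑ b ∈ K.biUnion G, α b := by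
  rw [mem_transversalBases_iff_forall_card_le (fun k : Σ x, Fin (m x) => G k.1)]
  simp only [Fintype.card_sigma, Fintype.card_fin]
  refine and_congr_right fun _ => ⟨fun hall K => ?_, fun hall s => ?_⟩
  · calc ∑ x ∈ K, m x = #(K.sigma fun x => univ) := by simp
      _ ≤ ∑ b ∈ (K.sigma fun x => univ).biUnion (fun k => G k.1), α b := hall _
      _ ≤ ∑ b ∈ K.biUnion G, α b := by
        refine sum_le_sum_of_subset fun b hb => ?_
        obtain ⟨⟨x, i⟩, hk, hb⟩ := mem_biUnion.1 hb
        exact mem_biUnion.2 ⟨x, (mem_sigma.1 hk).1, hb⟩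
  · calc #s ≤ #((s.image Sigma.fst).sigma fun x => univ) :=
          card_le_card fun k hk => mem_sigma.2 ⟨mem_image_of_mem _ hk, mem_univ _⟩
      _ = ∑ x ∈ s.image Sigma.fst, m x := by simp
      _ ≤ ∑ b ∈ s.biUnion (fun k => G k.1), α b := by rw [← image_biUnion]; exact hall _

theorem mem_transversalBases_sigma_compl_iff [Fintype κ] [DecidableEq κ] [Fintype β] (m : κ → ℕ)
    (F : κ → Finset β) (α : β → ℕ) :
    α ∈ transversalBases (fun k : Σ x, Fin (m x) => ((F k.1)ᶜ : Set β)) ↔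
      ∑ b, α b = ∑ x, m x ∧ ∀ K : Finset κ, ∑ x ∈ K, m x + ∑ b ∈ K.inf F, α b ≤ ∑ x, m x := by
  have := mem_transversalBases_sigma_iff m (fun x => (F x)ᶜ) α
  simp only [coe_compl] at this
  rw [this]
  refine and_congr_right fun hsum => forall_congr' fun K => ?_
  rw [← sup_eq_biUnion, ← Finset.compl_inf, ← hsum, ← sum_compl_add_sum (K.inf F)]
  omega

theorem mem_transversalBases_four_iff [Fintype β] (A W : Finset β) (p q r u : ℕ) (α : β → ℕ) :
    α ∈ transversalBases (fun k : Σ x, Fin (![p, q, r, u] x) =>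
        ((![A, W, A ∪ W, ∅] k.1)ᶜ : Set β)) ↔
      ∑ b, α b = p + q + r + u ∧ ∑ b ∈ A, α b ≤ q + u ∧ ∑ b ∈ W, α b ≤ p + u ∧
        ∑ b ∈ A ∪ W, α b ≤ p + q + u ∧ ∑ b ∈ A ∩ W, α b ≤ u := by
  rw [mem_transversalBases_sigma_compl_iff, Fin.sum_univ_four]
  refine and_congr_right fun hsum => ⟨fun hall => ?_, fun hbound K => ?_⟩
  · have hA : p + r + ∑ b ∈ A, α b ≤ p + q + r + u := by simpa using hall {0, 2}
    have hW : q + r + ∑ b ∈ W, α b ≤ p + q + r + u := by simpa using hall {1, 2}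
    have hAW : r + ∑ b ∈ A ∪ W, α b ≤ p + q + r + u := by simpa using hall {2}
    have hAiW : p + (q + r) + ∑ b ∈ A ∩ W, α b ≤ p + q + r + u := by
      simpa using hall {0, 1, 2}
    omega
  · obtain ⟨hA, hW, hAW, hAiW⟩ := hbound
    -- Each `K` lies in one of six sets of kinds `S`, each with a bound `X` on `K.inf`.
    have reduce (S : Finset (Fin 4)) (X : Finset β) (c : ℕ) (hKS : ∀ x, x ∉ S → x ∉ K)
        (hX : K.inf ![A, W, A ∪ W, ∅] ⊆ X) (hc : ∑ x ∈ S, ![p, q, r, u] x = c)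
        (h : c + ∑ b ∈ X, α b ≤ p + q + r + u) :
        ∑ x ∈ K, ![p, q, r, u] x + ∑ b ∈ K.inf ![A, W, A ∪ W, ∅], α b ≤ p + q + r + u := by
      have hKS' : K ⊆ S := fun x hx => by_contra fun hxS => hKS x hxS hx
      rw [← hc] at h
      exact le_trans (add_le_add (sum_le_sum_of_subset hKS') (sum_le_sum_of_subset hX)) h
    by_cases h3 : 3 ∈ K
    · exact reduce univ ∅ (p + q + r + u) (by simp) (inf_le h3)
        (by simp [Fin.sum_univ_four]) (by simp)
    by_cases h0 : 0 ∈ K <;> by_cases h1 : 1 ∈ K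
    · exact reduce {0, 1, 2} (A ∩ W) (p + q + r) (fun x hx => by fin_cases x <;> simp_all)
        (le_inf (inf_le h0) (inf_le h1)) (by simp [add_assoc]) (by omega)
    · exact reduce {0, 2} A (p + r) (fun x hx => by fin_cases x <;> simp_all)
        (inf_le h0) (by simp) (by omega)
    · exact reduce {1, 2} W (q + r) (fun x hx => by fin_cases x <;> simp_all)
        (inf_le h1) (by simp) (by omega)
    by_cases h2 : 2 ∈ K
    · exact reduce {2} (A ∪ W) r (fun x hx => by fin_cases x <;> simp_all)
        (inf_le h2) (by simp) (by omega)
    · exact reduce ∅ univ 0 (fun x hx => by fin_cases x <;> simp_all)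
        (subset_univ _) (by simp) (by simp [hsum])

def cyclicWindow (n t i : ℕ) : Finset (Fin n) :=
  univ.filter fun m : Fin n => (t ≤ m.val ∧ m.val < t + i) ∨ (n < t + i ∧ m.val < i + t - n)

theorem disjoint_filter_lt_cyclicWindow {n t i : ℕ} (h : t + i ≤ n) :
    Disjoint (univ.filter fun m : Fin n => m.val < t) (cyclicWindow n t i) := by
  simp only [disjoint_left, mem_filter, mem_univ, true_and, cyclicWindow]
  omega

theorem filter_lt_union_cyclicWindow {n t i : ℕ} (h : n < t + i) :
    (univ.filter fun m : Fin n => m.val < t) ∪ cyclicWindow n t i = univ := by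
  ext m
  simp only [mem_union, mem_filter, mem_univ, true_and, cyclicWindow, iff_true]
  omega

theorem stmt15_general (n i1 i2 t2 : ℕ) (hn : 3 ≤ n) (hi1b : i1 ≤ n - 2)
    (hi2b : i2 ≤ n - 2) (ht2 : t2 = i1) :
    ∃ C : Fin n → Set (Fin n),
      {α : Fin n → ℕ | ∑ k, α k = n ∧
        ∑ k ∈ Finset.univ.filter (fun m : Fin n => m.val < i1), α k ≤ i1 + 1 ∧
        ∑ k ∈ Finset.univ.filter (fun m : Fin n =>
            (t2 ≤ m.val ∧ m.val < t2 + i2) ∨ (n < t2 + i2 ∧ m.val < i2 + t2 - n)), α k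
          ≤ i2 + 1} =
      {α : Fin n → ℕ | ∃ j : Fin n → Fin n, (∀ k, j k ∈ C k) ∧ α = ∑ k, Pi.single (j k) 1} := by
  subst t2
  set A := univ.filter fun m : Fin n => m.val < i1
  set W := cyclicWindow n i1 i2
  set m := ![i2 + 1 - (i1 + i2 + 2 - n), i1 + 1 - (i1 + i2 + 2 - n), n - (i1 + i2 + 2),
    i1 + i2 + 2 - n]
  have hcard : Fintype.card (Σ x, Fin (m x)) = n := by
    simp only [Fintype.card_sigma, Fintype.card_fin, Fin.sum_univ_four, m, Matrix.cons_val]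
    omega
  refine ⟨(fun k : Σ x, Fin (m x) => ((![A, W, A ∪ W, ∅] k.1)ᶜ : Set (Fin n))) ∘
    (Fintype.equivFinOfCardEq hcard).symm, ?_⟩
  ext α
  change (∑ k, α k = n ∧ ∑ k ∈ A, α k ≤ i1 + 1 ∧ ∑ k ∈ W, α k ≤ i2 + 1) ↔ α ∈ transversalBases _
  rw [transversalBases_comp_equiv, mem_transversalBases_four_iff]
  have hunion_inter : ∑ b ∈ A ∪ W, α b + ∑ b ∈ A ∩ W, α b = ∑ b ∈ A, α b + ∑ b ∈ W, α b :=
    sum_union_inter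
  have hunion_le : ∑ b ∈ A ∪ W, α b ≤ ∑ b, α b := sum_le_sum_of_subset (subset_univ _)
  have hdisjoint (h : i1 + i2 ≤ n) : ∑ b ∈ A ∩ W, α b = 0 := by
    rw [disjoint_iff_inter_eq_empty.1 (disjoint_filter_lt_cyclicWindow h), sum_empty]
  have hcover (h : n < i1 + i2) : ∑ b ∈ A ∪ W, α b = ∑ b, α b := by
    rw [filter_lt_union_cyclicWindow h]
  omega

theorem stmt15 (n i1 i2 t2 : ℕ) (hn : 3 ≤ n) (hi1a : 2 ≤ i1) (hi1b : i1 ≤ n - 2)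
    (hi2a : 1 ≤ i2) (hi2b : i2 ≤ n - 2) (ht2 : t2 = i1) :
    ∃ C : Fin n → Set (Fin n),
      {α : Fin n → ℕ | ∑ k, α k = n ∧
        ∑ k ∈ Finset.univ.filter (fun m : Fin n => m.val < i1), α k ≤ i1 + 1 ∧
        ∑ k ∈ Finset.univ.filter (fun m : Fin n =>
            (t2 ≤ m.val ∧ m.val < t2 + i2) ∨ (n < t2 + i2 ∧ m.val < i2 + t2 - n)), α k
          ≤ i2 + 1} =
      {α : Fin n → ℕ | ∃ j : Fin n → Fin n, (∀ k, j k ∈ C k) ∧ α = ∑ k, Pi.single (j k) 1} :=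
  stmt15_general n i1 i2 t2 hn hi1b hi2b ht2
end
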